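/- Let (X, M, *) be a compact fuzzy metric space with the Łukasiewicz t-norm. Then (P(X), M̂, *) is a fuzzy metric space, where P(X) is the set of Borel probability measures on X and M̂ is the fuzzy Prokhorov function. -/

import Mathlib

open Set MeasureTheory Filter Topology

noncomputable section

/-- The Łukasiewicz t-norm. -/
def luk (a b : ℝ) : ℝ := max (a + b - 1) 0

/-- A continuous t-norm on `[0,1]`. -/
structure IsContinuousTNorm (star : ℝ → ℝ → ℝ) : Prop where
  maps_to : ∀ a b, a ∈ Icc (0:ℝ) 1 → b ∈ Icc (0:ℝ) 1 → star a b ∈ Icc (0:ℝ) 1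
  comm : ∀ a b, a ∈ Icc (0:ℝ) 1 → b ∈ Icc (0:ℝ) 1 → star a b = star b a
  assoc : ∀ a b c, a ∈ Icc (0:ℝ) 1 → b ∈ Icc (0:ℝ) 1 → c ∈ Icc (0:ℝ) 1 →
    star (star a b) c = star a (star b c)
  continuous : ContinuousOn (fun p : ℝ × ℝ => star p.1 p.2) (Icc 0 1 ×ˢ Icc 0 1)
  one_right : ∀ a, a ∈ Icc (0:ℝ) 1 → star a 1 = a
  mono : ∀ a b c d, a ∈ Icc (0:ℝ) 1 → b ∈ Icc (0:ℝ) 1 → c ∈ Icc (0:ℝ) 1 →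
    d ∈ Icc (0:ℝ) 1 → a ≤ c → b ≤ d → star a b ≤ star c d

/-- A fuzzy metric (George–Veeramani) with respect to a t-norm `star`. -/
structure IsFuzzyMetric {X : Type*} (M : X → X → ℝ → ℝ) (star : ℝ → ℝ → ℝ) : Prop where
  pos : ∀ x y t, 0 < t → 0 < M x y t
  le_one : ∀ x y t, 0 < t → M x y t ≤ 1
  eq_one_iff : ∀ x y t, 0 < t → (M x y t = 1 ↔ x = y)
  symm : ∀ x y t, 0 < t → M x y t = M y x t
  triangle : ∀ x y z t s, 0 < t → 0 < s → star (M x y t) (M y z s) ≤ M x z (t + s)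
  continuousOn : ∀ x y, ContinuousOn (fun t => M x y t) (Ioi (0:ℝ))

/-- The open ball `B(x,r,t)` in a fuzzy metric space. -/
def fmBall {X : Type*} (M : X → X → ℝ → ℝ) (x : X) (r t : ℝ) : Set X :=
  {y | 1 - r < M x y t}

/-- The `r,t`-expansion `A^{r,t}` of a set `A`. -/
def fmExpand {X : Type*} (M : X → X → ℝ → ℝ) (A : Set X) (r t : ℝ) : Set X :=
  ⋃ x ∈ A, fmBall M x r t

/-- The fuzzy metric `M` generates the given topology on `X`. -/
def GeneratesTopology {X : Type*} [TopologicalSpace X] (M : X → X → ℝ → ℝ) : Prop :=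
  TopologicalSpace.IsTopologicalBasis
    {s : Set X | ∃ x r t, 0 < r ∧ r < 1 ∧ 0 < t ∧ s = fmBall M x r t}

/-- The set of admissible radii in the definition of the fuzzy Prokhorov metric. -/
def prokSet {X : Type*} [MeasurableSpace X] (M : X → X → ℝ → ℝ)
    (μ ν : Measure X) (t : ℝ) : Set ℝ :=
  {r | 0 < r ∧ r < 1 ∧ ∀ A : Set X, MeasurableSet A →
    μ A ≤ ν (fmExpand M A r t) + ENNReal.ofReal r ∧
    ν A ≤ μ (fmExpand M A r t) + ENNReal.ofReal r}

/-- The fuzzy Prokhorov function `M̂` on measures. -/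
def fuzzyProkhorov {X : Type*} [MeasurableSpace X] (M : X → X → ℝ → ℝ)
    (μ ν : Measure X) (t : ℝ) : ℝ :=
  1 - sInf (prokSet M μ ν t)


/-! Under the Łukasiewicz t-norm the triangle inequality for `M` is additive,
`M x y t + M y z s - 1 ≤ M x z (t + s)`, so expansions compose:
`(A^{r,t})^{r',s} ⊆ A^{r+r',t+s}`, and admissible radii add up; this is the triangle inequality
for `M̂`. Compactness of `X` is used three times: `M · · t` is bounded below by a positive
constant (so `M̂ > 0`), `M x y t` is continuous in `t` uniformly in `(x, y)` (so `M̂` is continuous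
in `t`), and a closed set is the intersection of its expansions `A^{r,t}` as `r → 0` (so `M̂ = 1`
makes the two measures agree on closed sets, hence everywhere). All three come from the fact that
`(x, y) ↦ M x y t` is lower semicontinuous and, after a small shift in time, also upper
semicontinuous. -/

section

variable {X : Type*} {M : X → X → ℝ → ℝ}

theorem fmExpand_subset_fmExpand (A : Set X) {r r' t t' : ℝ}
    (h : ∀ x y, 1 - r < M x y t → 1 - r' < M x y t') :
    fmExpand M A r t ⊆ fmExpand M A r' t' :=
  iUnion₂_mono fun x _ y => h x y

namespace IsFuzzyMetric

theorem apply_self (hM : IsFuzzyMetric M luk) (x : X) {t : ℝ} (ht : 0 < t) : M x x t = 1 :=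
  (hM.eq_one_iff x x t ht).mpr rfl

theorem add_sub_one_le (hM : IsFuzzyMetric M luk) (x y z : X) {t s : ℝ} (ht : 0 < t)
    (hs : 0 < s) : M x y t + M y z s - 1 ≤ M x z (t + s) :=
  (le_max_left _ _).trans (hM.triangle x y z t s ht hs)

theorem mono (hM : IsFuzzyMetric M luk) (x y : X) {s t : ℝ} (hs : 0 < s) (hst : s ≤ t) :
    M x y s ≤ M x y t := by
  rcases hst.eq_or_lt with rfl | hlt
  · rfl
  · have h := hM.add_sub_one_le x y y hs (sub_pos.2 hlt)
    rw [hM.apply_self y (sub_pos.2 hlt), add_sub_cancel] at h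
    linarith

theorem sub_two_mul_lt (hM : IsFuzzyMetric M luk) {a b c e : X} {r d s : ℝ} (hd : 0 < d)
    (hs : 0 < s) (hab : 1 - r < M a b d) (hce : 1 - r < M c e d) :
    M b c s - 2 * r < M a e (d + s + d) := by
  have h₁ := hM.add_sub_one_le a b c hd hs
  have h₂ := hM.add_sub_one_le a c e (add_pos hd hs) hd
  linarith

theorem mem_fmBall_self (hM : IsFuzzyMetric M luk) (x : X) {r t : ℝ} (hr : 0 < r) (ht : 0 < t) :
    x ∈ fmBall M x r t :=
  show 1 - r < M x x t by rw [hM.apply_self x ht]; linarith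

theorem subset_fmExpand (hM : IsFuzzyMetric M luk) (A : Set X) {r t : ℝ} (hr : 0 < r)
    (ht : 0 < t) : A ⊆ fmExpand M A r t := fun x hx =>
  mem_biUnion hx (hM.mem_fmBall_self x hr ht)

theorem fmExpand_fmExpand_subset (hM : IsFuzzyMetric M luk) (A : Set X) {r r' t s : ℝ}
    (ht : 0 < t) (hs : 0 < s) :
    fmExpand M (fmExpand M A r t) r' s ⊆ fmExpand M A (r + r') (t + s) := by
  intro z hz
  obtain ⟨y, hy, hyz⟩ := mem_iUnion₂.1 hz
  obtain ⟨x, hx, hxy⟩ := mem_iUnion₂.1 hy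
  refine mem_biUnion hx (show 1 - (r + r') < M x z (t + s) from ?_)
  have hxyz := hM.add_sub_one_le x y z ht hs
  have hxy' : 1 - r < M x y t := hxy
  have hyz' : 1 - r' < M y z s := hyz
  linarith

variable [TopologicalSpace X]

theorem isOpen_fmBall (hM : IsFuzzyMetric M luk) (hgen : GeneratesTopology M) (x : X) (r : ℝ)
    {t : ℝ} (ht : 0 < t) : IsOpen (fmBall M x r t) := by
  rcases lt_or_ge r 1 with hr1 | hr1
  · rcases lt_or_ge 0 r with hr0 | hr0
    · exact hgen.isOpen ⟨x, r, t, hr0, hr1, ht, rfl⟩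
    · convert isOpen_empty
      exact eq_empty_of_forall_notMem fun y hy => by
        linarith [hM.le_one x y t ht, show 1 - r < M x y t from hy]
  · convert isOpen_univ
    exact eq_univ_of_forall fun y => show 1 - r < M x y t by linarith [hM.pos x y t ht]

theorem isOpen_fmExpand (hM : IsFuzzyMetric M luk) (hgen : GeneratesTopology M) (A : Set X)
    (r : ℝ) {t : ℝ} (ht : 0 < t) : IsOpen (fmExpand M A r t) :=
  isOpen_biUnion fun x _ => hM.isOpen_fmBall hgen x r ht

theorem fmBall_mem_nhds (hM : IsFuzzyMetric M luk) (hgen : GeneratesTopology M) (x : X)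
    {r t : ℝ} (hr : 0 < r) (ht : 0 < t) : fmBall M x r t ∈ 𝓝 x :=
  (hM.isOpen_fmBall hgen x r ht).mem_nhds (hM.mem_fmBall_self x hr ht)

theorem lowerSemicontinuous (hM : IsFuzzyMetric M luk) (hgen : GeneratesTopology M) {t : ℝ}
    (ht : 0 < t) : LowerSemicontinuous fun p : X × X => M p.1 p.2 t := by
  rintro ⟨x, y⟩ c (hc : c < M x y t)
  obtain ⟨t', ht't, hct', ht'⟩ :=
    ((((hM.continuousOn x y).continuousAt (Ioi_mem_nhds ht)).eventually
      (lt_mem_nhds hc)).and (lt_mem_nhds ht)).exists_lt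
  have hd : 0 < (t - t') / 2 := by linarith
  have hρ : 0 < (M x y t' - c) / 2 := by linarith
  filter_upwards [prod_mem_nhds (hM.fmBall_mem_nhds hgen x hρ hd)
    (hM.fmBall_mem_nhds hgen y hρ hd)] with ⟨x', y'⟩ ⟨hx', hy'⟩
  have hx'' : 1 - (M x y t' - c) / 2 < M x' x ((t - t') / 2) := hM.symm x x' _ hd ▸ hx'
  have h := hM.sub_two_mul_lt hd ht' hx'' hy'
  rw [show (t - t') / 2 + t' + (t - t') / 2 = t by ring] at h
  show c < M x' y' t
  linarith

theorem eventually_apply_add_le_apply_sub (hM : IsFuzzyMetric M luk) (hgen : GeneratesTopology M)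
    {t ε : ℝ} (ht : 0 < t) (hε : 0 < ε) (p : X × X) :
    ∀ᶠ z : ℝ × (X × X) in 𝓝 (0, p), M z.2.1 z.2.2 (t + z.1) ≤ M z.2.1 z.2.2 (t - z.1) + ε := by
  obtain ⟨η, hη, hcont⟩ := Metric.continuousAt_iff.1
    ((hM.continuousOn p.1 p.2).continuousAt (Ioi_mem_nhds ht)) (ε / 4) (by positivity)
  obtain ⟨d, hd, hdη, hdt⟩ : ∃ d > 0, 3 * d < η ∧ 3 * d < t :=
    ⟨min η t / 4, by positivity, by linarith [min_le_left η t], by linarith [min_le_right η t]⟩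
  have hplus := hcont (show dist (t + 3 * d) t < η by
    rw [Real.dist_eq, abs_lt]; constructor <;> linarith)
  have hminus := hcont (show dist (t - 3 * d) t < η by
    rw [Real.dist_eq, abs_lt]; constructor <;> linarith)
  rw [Real.dist_eq, abs_lt] at hplus hminus
  -- Near `p`: `M x y (t + δ) ≤ M p (t + 3d) + ε/4 ≤ M p (t - 3d) + 3ε/4 ≤ M x y (t - δ) + ε`.
  have hε8 : 0 < ε / 8 := by positivity
  filter_upwards [prod_mem_nhds (Ioo_mem_nhds (neg_neg_of_pos hd) hd)
    (prod_mem_nhds (hM.fmBall_mem_nhds hgen p.1 hε8 hd) (hM.fmBall_mem_nhds hgen p.2 hε8 hd))]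
  rintro ⟨δ, x, y⟩ ⟨⟨hδ₁, hδ₂⟩, hx, hy⟩
  have hx' : 1 - ε / 8 < M x p.1 d := hM.symm p.1 x d hd ▸ hx
  have hy' : 1 - ε / 8 < M y p.2 d := hM.symm p.2 y d hd ▸ hy
  have upper := hM.sub_two_mul_lt (s := t + d) hd (by linarith) hx hy'
  have lower := hM.sub_two_mul_lt (s := t - 3 * d) hd (by linarith) hx' hy
  rw [show d + (t + d) + d = t + 3 * d by ring] at upper
  rw [show d + (t - 3 * d) + d = t - d by ring] at lower
  have e₁ : M x y (t + δ) ≤ M x y (t + d) := hM.mono x y (by linarith) (by linarith)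
  have e₂ : M x y (t - d) ≤ M x y (t - δ) := hM.mono x y (by linarith) (by linarith)
  dsimp only
  linarith

variable [CompactSpace X]

theorem exists_pos_forall_lt (hM : IsFuzzyMetric M luk) (hgen : GeneratesTopology M) {t : ℝ}
    (ht : 0 < t) : ∃ c > 0, ∀ x y : X, c < M x y t := by
  rcases isEmpty_or_nonempty X with hX | hX
  · exact ⟨1, one_pos, fun x => isEmptyElim x⟩
  obtain ⟨p, -, hp⟩ := ((hM.lowerSemicontinuous hgen ht).lowerSemicontinuousOn univ).exists_isMinOn
    univ_nonempty isCompact_univ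
  refine ⟨M p.1 p.2 t / 2, half_pos (hM.pos _ _ t ht), fun x y => ?_⟩
  have hmin : M p.1 p.2 t ≤ M x y t := hp (mem_univ (x, y))
  linarith [hM.pos p.1 p.2 t ht]

theorem exists_forall_apply_add_le_apply_sub (hM : IsFuzzyMetric M luk)
    (hgen : GeneratesTopology M) {t ε : ℝ} (ht : 0 < t) (hε : 0 < ε) :
    ∃ δ ∈ Ioo 0 t, ∀ x y : X, M x y (t + δ) ≤ M x y (t - δ) + ε := by
  have h := isCompact_univ.eventually_forall_of_forall_eventually
    (P := fun δ (p : X × X) => M p.1 p.2 (t + δ) ≤ M p.1 p.2 (t - δ) + ε)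
    fun p _ => hM.eventually_apply_add_le_apply_sub hgen ht hε p
  obtain ⟨δ, hδ, hδM, hδt⟩ := (h.and (gt_mem_nhds ht)).exists_gt
  exact ⟨δ, ⟨hδ, hδt⟩, fun x y => hδM (x, y) (mem_univ _)⟩

theorem mem_of_eventually_mem_fmExpand (hM : IsFuzzyMetric M luk) (hgen : GeneratesTopology M)
    {A : Set X} (hA : IsClosed A) {y : X} {t : ℝ} (ht : 0 < t) {ι : Type*} {l : Filter ι}
    [l.NeBot] {r : ι → ℝ} (hr : Tendsto r l (𝓝 0)) (hy : ∀ᶠ i in l, y ∈ fmExpand M A (r i) t) :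
    y ∈ A := by
  by_contra hyA
  -- Each `x ∈ A` is `M`-separated from `y`, locally uniformly; compactness of `A` makes it uniform.
  have hsep : ∀ x ∈ A, ∀ᶠ z : ℝ × X in 𝓝 (0, x), M z.2 y t < 1 - z.1 := by
    intro x hx
    have hlt : M x y (1 + t) < 1 := (hM.le_one x y _ (by positivity)).lt_of_ne
      (mt (hM.eq_one_iff x y _ (by positivity)).1 (ne_of_mem_of_not_mem hx hyA))
    have hρ : 0 < (1 - M x y (1 + t)) / 2 := by linarith
    filter_upwards [prod_mem_nhds (Ioo_mem_nhds (neg_neg_of_pos hρ) hρ)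
      (hM.fmBall_mem_nhds hgen x hρ one_pos)]
    rintro ⟨ρ, x'⟩ ⟨⟨-, hρ'⟩, hx' : 1 - _ < M x x' 1⟩
    have := hM.add_sub_one_le x x' y one_pos ht
    dsimp only
    linarith
  obtain ⟨i, hyi, hi⟩ := (hy.and (hr.eventually (hA.isCompact.eventually_forall_of_forall_eventually
    (P := fun ρ x => M x y t < 1 - ρ) hsep))).exists
  obtain ⟨x, hx, hxy⟩ := mem_iUnion₂.1 hyi
  exact lt_asymm (hi x hx) hxy

end IsFuzzyMetric

section prokSet

variable [MeasurableSpace X] {μ ν τ : Measure X} {t : ℝ}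

theorem prokSet_comm (μ ν : Measure X) (t : ℝ) : prokSet M μ ν t = prokSet M ν μ t := by
  ext r
  exact and_congr_right fun _ => and_congr_right fun _ =>
    forall₂_congr fun _ _ => and_comm

theorem bddBelow_prokSet : BddBelow (prokSet M μ ν t) :=
  ⟨0, fun _ hr => hr.1.le⟩

theorem sInf_prokSet_nonneg : 0 ≤ sInf (prokSet M μ ν t) :=
  Real.sInf_nonneg fun _ hr => hr.1.le

theorem sInf_prokSet_lt_one (hne : (prokSet M μ ν t).Nonempty) : sInf (prokSet M μ ν t) < 1 :=
  let ⟨_, hr⟩ := hne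
  (csInf_le bddBelow_prokSet hr).trans_lt hr.2.1

theorem sInf_prokSet_le (hne : (prokSet M μ ν t).Nonempty) {r : ℝ}
    (h : r < 1 → r ∈ prokSet M μ ν t) : sInf (prokSet M μ ν t) ≤ r := by
  rcases lt_or_ge r 1 with hr | hr
  · exact csInf_le bddBelow_prokSet (h hr)
  · exact (sInf_prokSet_lt_one hne).le.trans hr

theorem mem_prokSet_of_subset {t₁ t₂ r r' : ℝ} (hr : r ∈ prokSet M μ ν t₁) (hrr' : r ≤ r')
    (hr' : r' < 1) (hsub : ∀ A : Set X, fmExpand M A r t₁ ⊆ fmExpand M A r' t₂) :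
    r' ∈ prokSet M μ ν t₂ := by
  obtain ⟨hr0, -, h⟩ := hr
  have hof : ENNReal.ofReal r ≤ ENNReal.ofReal r' := ENNReal.ofReal_le_ofReal hrr'
  refine ⟨hr0.trans_le hrr', hr', fun A hA => ⟨?_, ?_⟩⟩
  · exact (h A hA).1.trans (add_le_add (measure_mono (hsub A)) hof)
  · exact (h A hA).2.trans (add_le_add (measure_mono (hsub A)) hof)

theorem Ioo_subset_prokSet_of_sInf_eq_zero (hne : (prokSet M μ ν t).Nonempty)
    (h0 : sInf (prokSet M μ ν t) = 0) : Ioo 0 1 ⊆ prokSet M μ ν t := by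
  intro r ⟨hr0, hr1⟩
  obtain ⟨r₀, hr₀, hr₀r⟩ := exists_lt_of_csInf_lt hne (h0 ▸ hr0)
  exact mem_prokSet_of_subset hr₀ hr₀r.le hr1 fun A =>
    fmExpand_subset_fmExpand A fun x y h => by linarith

theorem Ioo_subset_prokSet_self (hM : IsFuzzyMetric M luk) (ht : 0 < t) :
    Ioo 0 1 ⊆ prokSet M μ μ t := by
  intro r ⟨hr0, hr1⟩
  have h A : μ A ≤ μ (fmExpand M A r t) + ENNReal.ofReal r :=
    (measure_mono (hM.subset_fmExpand A hr0 ht)).trans le_self_add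
  exact ⟨hr0, hr1, fun A _ => ⟨h A, h A⟩⟩

theorem sInf_prokSet_le_sInf_add {t₁ t₂ ε : ℝ} (hε : 0 ≤ ε)
    (hne₁ : (prokSet M μ ν t₁).Nonempty) (hne₂ : (prokSet M μ ν t₂).Nonempty)
    (hM : ∀ x y, M x y t₁ ≤ M x y t₂ + ε) :
    sInf (prokSet M μ ν t₂) ≤ sInf (prokSet M μ ν t₁) + ε := by
  have h : ∀ r ∈ prokSet M μ ν t₁, sInf (prokSet M μ ν t₂) - ε ≤ r := fun r hr =>
    sub_le_iff_le_add.2 <| sInf_prokSet_le hne₂ fun hr' =>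
      mem_prokSet_of_subset hr (le_add_of_nonneg_right hε) hr' fun A =>
        fmExpand_subset_fmExpand A fun x y hxy => by linarith [hM x y]
  linarith [le_csInf hne₁ h]

variable [TopologicalSpace X] [BorelSpace X]

theorem measure_le_measure_fmExpand_add (hM : IsFuzzyMetric M luk) (hgen : GeneratesTopology M)
    {A : Set X} {r r' s : ℝ} (ht : 0 < t) (hs : 0 < s) (hr : 0 ≤ r) (hr' : 0 ≤ r')
    (h₁ : μ A ≤ ν (fmExpand M A r t) + ENNReal.ofReal r)
    (h₂ : ∀ B, MeasurableSet B → ν B ≤ τ (fmExpand M B r' s) + ENNReal.ofReal r') :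
    μ A ≤ τ (fmExpand M A (r + r') (t + s)) + ENNReal.ofReal (r + r') :=
  calc μ A ≤ ν (fmExpand M A r t) + ENNReal.ofReal r := h₁
    _ ≤ τ (fmExpand M (fmExpand M A r t) r' s) + ENNReal.ofReal r' + ENNReal.ofReal r := by
      gcongr
      exact h₂ _ (hM.isOpen_fmExpand hgen A r ht).measurableSet
    _ ≤ τ (fmExpand M A (r + r') (t + s)) + (ENNReal.ofReal r + ENNReal.ofReal r') := by
      rw [add_assoc, add_comm (ENNReal.ofReal r')]
      gcongr
      exact hM.fmExpand_fmExpand_subset A ht hs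
    _ = τ (fmExpand M A (r + r') (t + s)) + ENNReal.ofReal (r + r') := by
      rw [ENNReal.ofReal_add hr hr']

theorem mem_prokSet_add (hM : IsFuzzyMetric M luk) (hgen : GeneratesTopology M) {s r r' : ℝ}
    (ht : 0 < t) (hs : 0 < s) (hr : r ∈ prokSet M μ ν t) (hr' : r' ∈ prokSet M ν τ s)
    (h1 : r + r' < 1) : r + r' ∈ prokSet M μ τ (t + s) := by
  obtain ⟨hr0, -, h⟩ := hr
  obtain ⟨hr'0, -, h'⟩ := hr'
  refine ⟨add_pos hr0 hr'0, h1, fun A hA => ⟨?_, ?_⟩⟩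
  · exact measure_le_measure_fmExpand_add hM hgen ht hs hr0.le hr'0.le (h A hA).1
      fun B hB => (h' B hB).1
  · have := measure_le_measure_fmExpand_add hM hgen hs ht hr'0.le hr0.le (h' A hA).2
      fun B hB => (h B hB).2
    rwa [add_comm r', add_comm s] at this

theorem sInf_prokSet_add_le (hM : IsFuzzyMetric M luk) (hgen : GeneratesTopology M) {s : ℝ}
    (ht : 0 < t) (hs : 0 < s) (hne₁ : (prokSet M μ ν t).Nonempty)
    (hne₂ : (prokSet M ν τ s).Nonempty) (hne₃ : (prokSet M μ τ (t + s)).Nonempty) :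
    sInf (prokSet M μ τ (t + s)) ≤ sInf (prokSet M μ ν t) + sInf (prokSet M ν τ s) := by
  have h : ∀ r' ∈ prokSet M ν τ s, sInf (prokSet M μ τ (t + s)) - sInf (prokSet M μ ν t) ≤ r' :=
    fun r' hr' => sub_le_comm.1 <| le_csInf hne₁ fun r hr => sub_le_iff_le_add.2 <|
      sInf_prokSet_le hne₃ (mem_prokSet_add hM hgen ht hs hr hr')
  linarith [le_csInf hne₂ h]

end prokSet

section Compact

variable [TopologicalSpace X] [CompactSpace X] [MeasurableSpace X] {μ ν : Measure X} {t : ℝ}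

theorem prokSet_nonempty (hM : IsFuzzyMetric M luk) (hgen : GeneratesTopology M)
    [IsProbabilityMeasure μ] [IsProbabilityMeasure ν] (ht : 0 < t) :
    (prokSet M μ ν t).Nonempty := by
  obtain ⟨c, hc, hcM⟩ := hM.exists_pos_forall_lt hgen ht
  have hc' : 0 < min c (1 / 2) := lt_min hc one_half_pos
  refine ⟨1 - min c (1 / 2), by linarith [min_le_right c (1 / 2)], by linarith, fun A _ => ?_⟩
  rcases A.eq_empty_or_nonempty with rfl | ⟨x, hx⟩
  · simp
  have hA : fmExpand M A (1 - min c (1 / 2)) t = univ := eq_univ_of_forall fun y =>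
    mem_biUnion hx (show _ < M x y t by linarith [hcM x y, min_le_left c (1 / 2)])
  simp only [hA, measure_univ]
  exact ⟨prob_le_one.trans le_self_add, prob_le_one.trans le_self_add⟩

theorem continuousOn_sInf_prokSet (hM : IsFuzzyMetric M luk) (hgen : GeneratesTopology M)
    [IsProbabilityMeasure μ] [IsProbabilityMeasure ν] :
    ContinuousOn (fun t => sInf (prokSet M μ ν t)) (Ioi 0) := by
  have hne {t : ℝ} (ht : 0 < t) : (prokSet M μ ν t).Nonempty := prokSet_nonempty hM hgen ht
  refine Metric.continuousOn_iff.2 fun t ht ε hε => ?_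
  obtain ⟨δ, ⟨hδ, hδt⟩, hunif⟩ := hM.exists_forall_apply_add_le_apply_sub hgen ht (half_pos hε)
  refine ⟨δ, hδ, fun t' (ht' : 0 < t') hdist => ?_⟩
  rw [Real.dist_eq, abs_lt] at hdist ⊢
  have hle : ∀ t₁ t₂, t₁ ∈ Ioo (t - δ) (t + δ) → t₂ ∈ Ioo (t - δ) (t + δ) →
      ∀ x y, M x y t₁ ≤ M x y t₂ + ε / 2 := fun t₁ t₂ h₁ h₂ x y => by
    linarith [hunif x y, hM.mono x y (by linarith [h₁.1]) h₁.2.le,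
      hM.mono x y (sub_pos.2 hδt) h₂.1.le]
  have ht'δ : t' ∈ Ioo (t - δ) (t + δ) := ⟨by linarith, by linarith⟩
  have htδ : t ∈ Ioo (t - δ) (t + δ) := ⟨by linarith, by linarith⟩
  have h₁ := sInf_prokSet_le_sInf_add (half_pos hε).le (hne ht') (hne ht) (hle t' t ht'δ htδ)
  have h₂ := sInf_prokSet_le_sInf_add (half_pos hε).le (hne ht) (hne ht') (hle t t' htδ ht'δ)
  constructor <;> linarith

variable [BorelSpace X]

theorem measure_le_of_forall_le_fmExpand (hM : IsFuzzyMetric M luk) (hgen : GeneratesTopology M)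
    [IsFiniteMeasure ν] {A : Set X} (hA : IsClosed A) (ht : 0 < t)
    (h : ∀ r ∈ Ioo (0 : ℝ) 1, μ A ≤ ν (fmExpand M A r t) + ENNReal.ofReal r) : μ A ≤ ν A := by
  set r : ℕ → ℝ := fun n => 1 / (n + 2)
  have hr : Tendsto r atTop (𝓝 0) :=
    tendsto_const_nhds.div_atTop (tendsto_natCast_atTop_atTop.atTop_add tendsto_const_nhds)
  have hr01 n : r n ∈ Ioo 0 1 := ⟨by positivity, by
    rw [div_lt_one (by positivity)]; linarith [(n.cast_nonneg : (0 : ℝ) ≤ n)]⟩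
  have hanti : Antitone fun n => fmExpand M A (r n) t := fun m n hmn =>
    fmExpand_subset_fmExpand A fun x y hxy => by
      have : r n ≤ r m := by simp only [r]; gcongr
      linarith
  have hlim : Tendsto (fun n => ν (fmExpand M A (r n) t) + ENNReal.ofReal (r n)) atTop
      (𝓝 (ν (⋂ n, fmExpand M A (r n) t))) := by
    simpa using (tendsto_measure_iInter_atTop
      (fun n => (hM.isOpen_fmExpand hgen A (r n) ht).measurableSet.nullMeasurableSet) hanti
      ⟨0, measure_ne_top ν _⟩).add (ENNReal.tendsto_ofReal hr)
  calc μ A ≤ ν (⋂ n, fmExpand M A (r n) t) := ge_of_tendsto' hlim fun n => h _ (hr01 n)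
    _ ≤ ν A := measure_mono fun y hy => hM.mem_of_eventually_mem_fmExpand hgen hA ht hr
      (Eventually.of_forall (mem_iInter.1 hy))

theorem eq_of_Ioo_subset_prokSet (hM : IsFuzzyMetric M luk) (hgen : GeneratesTopology M)
    [IsFiniteMeasure μ] [IsFiniteMeasure ν] (ht : 0 < t) (h : Ioo 0 1 ⊆ prokSet M μ ν t) :
    μ = ν := by
  have hclosed A (hA : IsClosed A) : μ A = ν A := le_antisymm
    (measure_le_of_forall_le_fmExpand hM hgen hA ht fun _ hr => ((h hr).2.2 A hA.measurableSet).1)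
    (measure_le_of_forall_le_fmExpand hM hgen hA ht fun _ hr => ((h hr).2.2 A hA.measurableSet).2)
  refine ext_of_generate_finite _ ?_ isPiSystem_isClosed hclosed (hclosed univ isClosed_univ)
  rw [BorelSpace.measurable_eq (α := X), borel_eq_generateFrom_isClosed]

theorem sInf_prokSet_eq_zero_iff (hM : IsFuzzyMetric M luk) (hgen : GeneratesTopology M)
    [IsProbabilityMeasure μ] [IsProbabilityMeasure ν] (ht : 0 < t) :
    sInf (prokSet M μ ν t) = 0 ↔ μ = ν := by
  refine ⟨fun h0 => eq_of_Ioo_subset_prokSet hM hgen ht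
    (Ioo_subset_prokSet_of_sInf_eq_zero (prokSet_nonempty hM hgen ht) h0), ?_⟩
  rintro rfl
  refine le_antisymm ?_ sInf_prokSet_nonneg
  calc sInf (prokSet M μ μ t) ≤ sInf (Ioo (0 : ℝ) 1) :=
        csInf_le_csInf bddBelow_prokSet (nonempty_Ioo.2 one_pos) (Ioo_subset_prokSet_self hM ht)
    _ = 0 := csInf_Ioo one_pos

end Compact

end

/-- `(P(X), M̂, *)` is a fuzzy metric space. -/
theorem fuzzyProkhorov_isFuzzyMetric {X : Type*} [TopologicalSpace X] [CompactSpace X]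
    [MeasurableSpace X] [BorelSpace X]
    (M : X → X → ℝ → ℝ) (hM : IsFuzzyMetric M luk) (hgen : GeneratesTopology M) :
    IsFuzzyMetric
      (fun (μ ν : ProbabilityMeasure X) (t : ℝ) =>
        fuzzyProkhorov M (μ : Measure X) (ν : Measure X) t) luk := by
  have hne (μ ν : ProbabilityMeasure X) {t : ℝ} (ht : 0 < t) :
      (prokSet M (μ : Measure X) ν t).Nonempty :=
    prokSet_nonempty hM hgen ht
  refine ⟨fun μ ν t ht => ?_, fun μ ν t _ => ?_, fun μ ν t ht => ?_, fun μ ν t _ => ?_,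
    fun μ ν τ t s ht hs => ?_, fun μ ν => ?_⟩ <;> simp only [fuzzyProkhorov]
  · exact sub_pos.2 (sInf_prokSet_lt_one (hne μ ν ht))
  · exact sub_le_self _ sInf_prokSet_nonneg
  · rw [sub_eq_self, sInf_prokSet_eq_zero_iff hM hgen ht,
      ProbabilityMeasure.toMeasure_injective.eq_iff]
  · rw [prokSet_comm]
  · have hle := sInf_prokSet_add_le hM hgen ht hs (hne μ ν ht) (hne ν τ hs)
      (hne μ τ (add_pos ht hs))
    have hlt := sInf_prokSet_lt_one (hne μ τ (add_pos ht hs))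
    exact max_le (by linarith) (by linarith)
  · exact continuousOn_const.sub (continuousOn_sInf_prokSet hM hgen)
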